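/- Let S' be a finite set of independent Bernoulli-type nonnegative random variables X_i (taking value p_i with probability π_i and 0 otherwise) with Σ_i π_i ≤ k and k > 1/ε⁴ where 0 < ε ≤ 1/2 and 1/ε is an integer. Let u_m(S') = u(sum of the m largest realized values) for u concave nondecreasing with u(0)=0. Then (1+ε)·E[u_k(S')] ≥ E[u_{k(1+ε)}(S')]. -/

import Mathlib

/-!
The inequality holds for every realization. If `s` is a set of at most `k'` coordinates and
`t ⊆ s` consists of `k` largest of them, each coordinate in `s \ t` is at most the mean over `t`,
whence `k * ∑ s ≤ #s * ∑ t ≤ k' * sumTopK n k x`: the top-`k'` sum is at most `1 + ε` times the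
top-`k` sum. A concave `u` with `u 0 = 0` satisfies `u (c * y) ≤ c * u y` for `c ≥ 1` and `y ≥ 0`,
and monotonicity of `u` and of the integral conclude.
-/

open Finset MeasureTheory ProbabilityTheory

/-- Sum of the `m` largest coordinates of a nonnegative vector `x : Fin n → ℝ`. -/
noncomputable def sumTopK (n m : ℕ) (x : Fin n → ℝ) : ℝ :=
  ((Finset.univ.powerset.filter (fun s : Finset (Fin n) => s.card ≤ m)).sup'
    ⟨∅, by simp⟩ (fun s => ∑ i ∈ s, x i))

theorem Finset.exists_subset_card_eq_forall_le {α β : Type*} [DecidableEq α] [LinearOrder β]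
    (f : α → β) {s : Finset α} {k : ℕ} (hk : k ≤ s.card) :
    ∃ t ⊆ s, t.card = k ∧ ∀ i ∈ s \ t, ∀ j ∈ t, f i ≤ f j := by
  induction k with
  | zero => exact ⟨∅, empty_subset _, rfl, by simp⟩
  | succ k ih =>
    obtain ⟨t, hts, hcard, htop⟩ := ih (Nat.le_of_succ_le hk)
    have hne : (s \ t).Nonempty := by
      rw [← card_pos, card_sdiff_of_subset hts]
      omega
    obtain ⟨j, hj, hjmax⟩ := exists_max_image (s \ t) f hne
    rw [mem_sdiff] at hj
    refine ⟨insert j t, insert_subset hj.1 hts, by rw [card_insert_of_notMem hj.2, hcard], ?_⟩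
    intro i hi j' hj'
    have hi' : i ∈ s \ t := sdiff_subset_sdiff subset_rfl (subset_insert j t) hi
    rcases mem_insert.mp hj' with rfl | hj'
    · exact hjmax i hi'
    · exact htop i hi' j' hj'

theorem Finset.card_mul_sum_le_card_mul_sum_of_forall_le {α : Type*} [DecidableEq α]
    {x : α → ℝ} {s t : Finset α} (hts : t ⊆ s) (htop : ∀ i ∈ s \ t, ∀ j ∈ t, x i ≤ x j) :
    (t.card : ℝ) * ∑ i ∈ s, x i ≤ s.card * ∑ i ∈ t, x i := by
  have hrest : (t.card : ℝ) * ∑ i ∈ s \ t, x i ≤ (s \ t).card * ∑ i ∈ t, x i := by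
    rw [mul_sum, ← nsmul_eq_mul, ← sum_const]
    refine sum_le_sum fun i hi => ?_
    simpa using card_nsmul_le_sum t x (x i) (htop i hi)
  rw [← sum_sdiff hts, card_sdiff_of_subset hts, Nat.cast_sub (card_le_card hts)] at *
  linarith

section sumTopK

variable {n : ℕ}

theorem sum_le_sumTopK {m : ℕ} (x : Fin n → ℝ) {s : Finset (Fin n)} (hs : s.card ≤ m) :
    ∑ i ∈ s, x i ≤ sumTopK n m x :=
  le_sup' (fun s => ∑ i ∈ s, x i) (by simp [hs])

theorem sumTopK_nonneg (m : ℕ) (x : Fin n → ℝ) : 0 ≤ sumTopK n m x := by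
  simpa using sum_le_sumTopK (m := m) x (s := ∅) (by simp)

theorem sumTopK_le {m : ℕ} {x : Fin n → ℝ} {C : ℝ}
    (h : ∀ s : Finset (Fin n), s.card ≤ m → ∑ i ∈ s, x i ≤ C) : sumTopK n m x ≤ C :=
  sup'_le _ _ fun s hs => h s (mem_filter.mp hs).2

theorem sumTopK_mono {m : ℕ} {x y : Fin n → ℝ} (hxy : x ≤ y) : sumTopK n m x ≤ sumTopK n m y :=
  sumTopK_le fun _ hs => (sum_le_sum fun i _ => hxy i).trans (sum_le_sumTopK y hs)

theorem continuous_sumTopK (m : ℕ) : Continuous (sumTopK n m) :=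
  Continuous.finset_sup'_apply _ fun s _ => continuous_finsetSum s fun i _ => continuous_apply i

theorem natCast_mul_sumTopK_le {k k' : ℕ} (hkk' : k ≤ k') (x : Fin n → ℝ) :
    (k : ℝ) * sumTopK n k' x ≤ k' * sumTopK n k x := by
  have hM := sumTopK_nonneg k x
  rcases Nat.eq_zero_or_pos k with rfl | hk
  · simpa using mul_nonneg k'.cast_nonneg hM
  rw [mul_comm, ← le_div_iff₀ (by positivity)]
  refine sumTopK_le fun s hs => ?_
  rw [le_div_iff₀' (by positivity)]
  by_cases hsk : s.card ≤ k
  · calc (k : ℝ) * ∑ i ∈ s, x i ≤ k * sumTopK n k x := by gcongr; exact sum_le_sumTopK x hsk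
      _ ≤ k' * sumTopK n k x := by gcongr
  · obtain ⟨t, hts, htk, htop⟩ := exists_subset_card_eq_forall_le x (not_le.mp hsk).le
    calc (k : ℝ) * ∑ i ∈ s, x i = t.card * ∑ i ∈ s, x i := by rw [htk]
      _ ≤ s.card * ∑ i ∈ t, x i := card_mul_sum_le_card_mul_sum_of_forall_le hts htop
      _ ≤ s.card * sumTopK n k x := by gcongr; exact sum_le_sumTopK x htk.le
      _ ≤ k' * sumTopK n k x := by gcongr

theorem sumTopK_le_mul_sumTopK {k k' : ℕ} {c : ℝ} (hc : 1 ≤ c) (hk' : (k' : ℝ) = k * c)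
    (x : Fin n → ℝ) : sumTopK n k' x ≤ c * sumTopK n k x := by
  rcases Nat.eq_zero_or_pos k with rfl | hk
  · obtain rfl : k' = 0 := by simpa using hk'
    exact le_mul_of_one_le_left (sumTopK_nonneg 0 x) hc
  have hkk' : k ≤ k' := by
    exact_mod_cast hk' ▸ le_mul_of_one_le_right k.cast_nonneg hc
  have := natCast_mul_sumTopK_le hkk' x
  rw [hk', mul_assoc] at this
  exact le_of_mul_le_mul_left this (by exact_mod_cast hk)

end sumTopK

theorem ConcaveOn.smul_le_map_smul {𝕜 E β : Type*} [Ring 𝕜] [PartialOrder 𝕜] [IsOrderedRing 𝕜]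
    [AddCommMonoid E] [Module 𝕜 E] [AddCommMonoid β] [PartialOrder β] [Module 𝕜 β]
    {s : Set E} {f : E → β}
    (hf : ConcaveOn 𝕜 s f) (h0s : 0 ∈ s) (hf0 : f 0 = 0) {x : E} (hx : x ∈ s) {θ : 𝕜}
    (hθ0 : 0 ≤ θ) (hθ1 : θ ≤ 1) : θ • f x ≤ f (θ • x) := by
  simpa [hf0] using hf.2 hx h0s hθ0 (sub_nonneg.mpr hθ1) (add_sub_cancel θ 1)

theorem ConcaveOn.map_mul_le_mul_map {u : ℝ → ℝ} (hu : ConcaveOn ℝ (Set.Ici 0) u) (hu0 : u 0 = 0)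
    {c t : ℝ} (hc : 1 ≤ c) (ht : 0 ≤ t) : u (c * t) ≤ c * u t := by
  have hc0 : 0 < c := by linarith
  have := hu.smul_le_map_smul Set.self_mem_Ici hu0 (Set.mem_Ici.mpr (mul_nonneg hc0.le ht))
    (inv_nonneg.mpr hc0.le) (inv_le_one_of_one_le₀ hc)
  rw [smul_eq_mul, smul_eq_mul, inv_mul_cancel_left₀ hc0.ne'] at this
  rwa [inv_mul_le_iff₀ hc0] at this

theorem integrable_comp_sumTopK {Ω : Type*} [MeasurableSpace Ω] {μ : Measure Ω}
    [IsFiniteMeasure μ] {n : ℕ} {u : ℝ → ℝ} (hu : Monotone u) {X : Fin n → Ω → ℝ}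
    (hX : ∀ i, Measurable (X i))
    {p : Fin n → ℝ} (hXp : ∀ ω, (fun i => X i ω) ≤ p) (m : ℕ) :
    Integrable (fun ω => u (sumTopK n m fun i => X i ω)) μ := by
  have hmeas : Measurable fun ω => u (sumTopK n m fun i => X i ω) :=
    hu.measurable.comp ((continuous_sumTopK m).measurable.comp (measurable_pi_lambda _ hX))
  refine .of_bound hmeas.aestronglyMeasurable (max |u 0| |u (sumTopK n m p)|)
    (.of_forall fun ω => ?_)
  exact abs_le_max_abs_abs (hu (sumTopK_nonneg m _)) (hu (sumTopK_mono (hXp ω)))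

theorem relax_inventory_large_k_general
    {Ω : Type*} [MeasureSpace Ω] [IsProbabilityMeasure (ℙ : Measure Ω)]
    (u : ℝ → ℝ) (hconc : ConcaveOn ℝ (Set.Ici (0 : ℝ)) u) (hmono : Monotone u)
    (h0 : u 0 = 0) (n k k' : ℕ) (ε : ℝ)
    (hε : 0 < ε) (hk' : (k' : ℝ) = (k : ℝ) * (1 + ε))
    (p : Fin n → ℝ) (X : Fin n → Ω → ℝ)
    (hp : ∀ i, 0 < p i) (hmeas : ∀ i, Measurable (X i))
    (hval : ∀ i ω, X i ω = p i ∨ X i ω = 0) :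
    ∫ ω, u (sumTopK n k' (fun i => X i ω))
      ≤ (1 + ε) * ∫ ω, u (sumTopK n k (fun i => X i ω)) := by
  have hc : 1 ≤ 1 + ε := by linarith
  have hXp : ∀ ω, (fun i => X i ω) ≤ p := fun ω i => by
    rcases hval i ω with h | h <;> simp [h, (hp i).le]
  have hpointwise : ∀ ω,
      u (sumTopK n k' fun i => X i ω) ≤ (1 + ε) * u (sumTopK n k fun i => X i ω) :=
    fun ω => (hmono (sumTopK_le_mul_sumTopK hc hk' _)).trans
      (hconc.map_mul_le_mul_map h0 hc (sumTopK_nonneg k _))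
  calc ∫ ω, u (sumTopK n k' fun i => X i ω)
      ≤ ∫ ω, (1 + ε) * u (sumTopK n k fun i => X i ω) :=
        integral_mono (integrable_comp_sumTopK hmono hmeas hXp k')
          ((integrable_comp_sumTopK hmono hmeas hXp k).const_mul _) hpointwise
    _ = (1 + ε) * ∫ ω, u (sumTopK n k fun i => X i ω) := integral_const_mul _ _

/-- **Relaxing the inventory constraint for large `k`.**
Let `S' = {X₁,…,Xₙ}` be independent two-valued random variables (`X i = p i > 0`
with probability `π i`, else `0`) with `∑ π i ≤ k` and `k > 1/ε⁴`, where
`0 < ε ≤ 1/2` and `1/ε` is an integer.  Let `u_m(S') = u` applied to the sum of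
the `m` largest realized values, for `u` nondecreasing concave with `u 0 = 0`.
Then `(1+ε) E[u_k(S')] ≥ E[u_{k(1+ε)}(S')]`, where `k(1+ε)` is an integer `k'`. -/
theorem relax_inventory_large_k
    {Ω : Type*} [MeasureSpace Ω] [IsProbabilityMeasure (ℙ : Measure Ω)]
    (u : ℝ → ℝ) (hconc : ConcaveOn ℝ (Set.Ici (0 : ℝ)) u) (hmono : Monotone u)
    (h0 : u 0 = 0) (n k k' : ℕ) (ε : ℝ)
    (hε : 0 < ε) (hε2 : ε ≤ 1 / 2) (hεint : ∃ m : ℕ, (m : ℝ) * ε = 1)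
    (hk : (k : ℝ) > 1 / ε ^ 4) (hk' : (k' : ℝ) = (k : ℝ) * (1 + ε))
    (p π : Fin n → ℝ) (X : Fin n → Ω → ℝ)
    (hp : ∀ i, 0 < p i) (hmeas : ∀ i, Measurable (X i))
    (hval : ∀ i ω, X i ω = p i ∨ X i ω = 0)
    (hprob : ∀ i, ℙ {ω | X i ω = p i} = ENNReal.ofReal (π i))
    (hπsum : ∑ i, π i ≤ (k : ℝ))
    (hind : iIndepFun X ℙ) :
    ∫ ω, u (sumTopK n k' (fun i => X i ω))
      ≤ (1 + ε) * ∫ ω, u (sumTopK n k (fun i => X i ω)) :=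
  relax_inventory_large_k_general u hconc hmono h0 n k k' ε hε hk' p X hp hmeas hval
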